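/- Let X be a pointed metric space. Then on Lip₀(X) one has τ₀ ⊆ τ_γ ⊆ τ_Lip (the Lipschitz-norm topology), and τ_γ is the largest locally convex topology on Lip₀(X) which coincides with τ₀ on each norm-bounded subset of Lip₀(X). -/

import Mathlib

open Filter Topology Set Pointwise

set_option linter.unusedSectionVars false
set_option linter.unusedVariables false

noncomputable section

namespace LipApprox

variable (X : Type*) [MetricSpace X] (x₀ : X)
variable (F : Type*) [NormedAddCommGroup F] [NormedSpace ℝ F]

/-- The Lipschitz maps `X → F` vanishing at the base point, as a submodule of `X → F`. -/
def lip0Submodule : Submodule ℝ (X → F) where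
  carrier := {f | (∃ K, LipschitzWith K f) ∧ f x₀ = 0}
  add_mem' := by
    rintro f g ⟨⟨Kf, hf⟩, hf0⟩ ⟨⟨Kg, hg⟩, hg0⟩
    exact ⟨⟨Kf + Kg, hf.add hg⟩, by simp [hf0, hg0]⟩
  zero_mem' := ⟨⟨0, LipschitzWith.const 0⟩, rfl⟩
  smul_mem' := by
    rintro c f ⟨⟨K, hf⟩, hf0⟩
    exact ⟨⟨‖c‖₊ * K, (lipschitzWith_smul c).comp hf⟩, by simp [hf0]⟩

/-- The space `Lip₀(X, F)` of Lipschitz maps from `X` to `F` vanishing at the base point. -/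
def lip0 : Type _ := ↥(lip0Submodule X x₀ F)

instance : AddCommGroup (lip0 X x₀ F) :=
  inferInstanceAs (AddCommGroup ↥(lip0Submodule X x₀ F))

instance : Module ℝ (lip0 X x₀ F) :=
  inferInstanceAs (Module ℝ ↥(lip0Submodule X x₀ F))

variable {X x₀ F}

/-- The underlying function of an element of `Lip₀(X, F)`. -/
def toFun' (f : lip0 X x₀ F) : X → F := f.1

lemma exists_lip (f : lip0 X x₀ F) : ∃ K, LipschitzWith K (toFun' f) := f.2.1

lemma apply_base (f : lip0 X x₀ F) : toFun' f x₀ = 0 := f.2.2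

lemma toFun'_add (f g : lip0 X x₀ F) : toFun' (f + g) = toFun' f + toFun' g := rfl
lemma toFun'_neg (f : lip0 X x₀ F) : toFun' (-f) = -toFun' f := rfl
lemma toFun'_smul (c : ℝ) (f : lip0 X x₀ F) : toFun' (c • f) = c • toFun' f := rfl
lemma toFun'_zero : toFun' (0 : lip0 X x₀ F) = 0 := rfl

variable (X x₀ F) in
/-- The Lipschitz norm of an element of `Lip₀(X, F)`. -/
def lipNorm (f : lip0 X x₀ F) : ℝ :=
  ⨆ p : X × X, ‖toFun' f p.1 - toFun' f p.2‖ / dist p.1 p.2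

lemma ratio_le (f : lip0 X x₀ F) {K : NNReal} (hK : LipschitzWith K (toFun' f))
    (p : X × X) : ‖toFun' f p.1 - toFun' f p.2‖ / dist p.1 p.2 ≤ K := by
  rcases eq_or_ne p.1 p.2 with h | h
  · simp [h]
  · rw [div_le_iff₀ (dist_pos.2 h), ← dist_eq_norm]
    exact hK.dist_le_mul p.1 p.2

lemma bddAbove_ratio (f : lip0 X x₀ F) :
    BddAbove (Set.range fun p : X × X =>
      ‖toFun' f p.1 - toFun' f p.2‖ / dist p.1 p.2) := by
  obtain ⟨K, hK⟩ := exists_lip f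
  exact ⟨K, by rintro r ⟨p, rfl⟩; exact ratio_le f hK p⟩

lemma nonempty_pairs (x₀ : X) : Nonempty (X × X) := ⟨(x₀, x₀)⟩

lemma ratio_le_lipNorm (f : lip0 X x₀ F) (p : X × X) :
    ‖toFun' f p.1 - toFun' f p.2‖ / dist p.1 p.2 ≤ lipNorm X x₀ F f :=
  le_ciSup (bddAbove_ratio f) p

lemma lipNorm_nonneg (f : lip0 X x₀ F) : 0 ≤ lipNorm X x₀ F f := by
  have := ratio_le_lipNorm (x₀ := x₀) f (x₀, x₀)
  simpa using this

lemma norm_sub_le_lipNorm (f : lip0 X x₀ F) (x y : X) :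
    ‖toFun' f x - toFun' f y‖ ≤ lipNorm X x₀ F f * dist x y := by
  rcases eq_or_ne x y with rfl | h
  · simp
  · have := ratio_le_lipNorm (x₀ := x₀) f (x, y)
    rw [div_le_iff₀ (dist_pos.2 h)] at this
    simpa using this

instance : NormedAddCommGroup (lip0 X x₀ F) :=
  AddGroupNorm.toNormedAddCommGroup
    { toFun := lipNorm X x₀ F
      map_zero' := by
        haveI : Nonempty (X × X) := nonempty_pairs x₀
        have h0 : ∀ p : X × X,
            ‖toFun' (0 : lip0 X x₀ F) p.1 - toFun' (0 : lip0 X x₀ F) p.2‖ /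
              dist p.1 p.2 = 0 := by
          intro p; rw [toFun'_zero]; simp
        simp only [lipNorm, h0, ciSup_const]
      add_le' := by
        intro f g
        haveI : Nonempty (X × X) := nonempty_pairs x₀
        apply ciSup_le
        intro p
        rcases eq_or_ne p.1 p.2 with h | h
        · simp only [h, dist_self, div_zero]
          exact add_nonneg (lipNorm_nonneg f) (lipNorm_nonneg g)
        · have hnum : ‖toFun' (f + g) p.1 - toFun' (f + g) p.2‖ ≤
              ‖toFun' f p.1 - toFun' f p.2‖ + ‖toFun' g p.1 - toFun' g p.2‖ := by
            rw [toFun'_add, Pi.add_apply, Pi.add_apply, add_sub_add_comm]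
            exact norm_add_le _ _
          calc ‖toFun' (f + g) p.1 - toFun' (f + g) p.2‖ / dist p.1 p.2
              ≤ (‖toFun' f p.1 - toFun' f p.2‖ +
                  ‖toFun' g p.1 - toFun' g p.2‖) / dist p.1 p.2 := by gcongr
            _ = ‖toFun' f p.1 - toFun' f p.2‖ / dist p.1 p.2 +
                  ‖toFun' g p.1 - toFun' g p.2‖ / dist p.1 p.2 := add_div _ _ _
            _ ≤ lipNorm X x₀ F f + lipNorm X x₀ F g :=
                add_le_add (ratio_le_lipNorm f p) (ratio_le_lipNorm g p)
      neg' := by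
        intro f
        simp only [lipNorm]
        congr 1
        funext p
        congr 1
        rw [toFun'_neg, Pi.neg_apply, Pi.neg_apply, neg_sub_neg, norm_sub_rev]
      eq_zero_of_map_eq_zero' := by
        intro f hf
        have hzero : ∀ x : X, toFun' f x = 0 := by
          intro x
          rcases eq_or_ne x x₀ with h | h
          · rw [h]; exact apply_base f
          · have hf' : lipNorm X x₀ F f = 0 := hf
            have h1 := ratio_le_lipNorm (x₀ := x₀) f (x, x₀)
            rw [hf', div_le_iff₀ (dist_pos.2 h), zero_mul] at h1
            have h2 : toFun' f x - toFun' f x₀ = 0 := by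
              simpa using norm_le_zero_iff.1 h1
            have h3 := apply_base f
            rw [h3, sub_zero] at h2
            exact h2
        exact Subtype.ext (funext hzero) }

lemma lip0_norm_def (f : lip0 X x₀ F) : ‖f‖ = lipNorm X x₀ F f := rfl

instance : NormedSpace ℝ (lip0 X x₀ F) where
  norm_smul_le c f := by
    haveI : Nonempty (X × X) := nonempty_pairs x₀
    rw [lip0_norm_def, lip0_norm_def, lipNorm]
    apply ciSup_le
    intro p
    have h1 : toFun' (c • f) p.1 - toFun' (c • f) p.2 =
        c • (toFun' f p.1 - toFun' f p.2) := by
      rw [toFun'_smul, Pi.smul_apply, Pi.smul_apply, smul_sub]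
    rw [h1, norm_smul]
    rcases eq_or_ne p.1 p.2 with h | h
    · simp only [h, dist_self, div_zero]
      exact mul_nonneg (norm_nonneg c) (lipNorm_nonneg f)
    · rw [mul_div_assoc]
      exact mul_le_mul_of_nonneg_left (ratio_le_lipNorm (x₀ := x₀) f p) (norm_nonneg c)

variable (X x₀ F)

/-- Elements of `Lip₀(X, F)` as continuous maps. -/
def toCM (f : lip0 X x₀ F) : C(X, F) :=
  ⟨toFun' f, by
    obtain ⟨K, hK⟩ := exists_lip f
    exact hK.continuous⟩

/-- The compact-open topology `τ₀` on `Lip₀(X, F)`. -/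
def tau0 : TopologicalSpace (lip0 X x₀ F) :=
  TopologicalSpace.induced (toCM X x₀ F) ContinuousMap.compactOpen

/-- The set `γ(U) = ⋃ₙ (U₀ ∩ B + U₁ ∩ 2B + ⋯ + Uₙ ∩ 2ⁿB)` from the definition of the
mixed topology, where `B` is the closed unit ball of `Lip₀(X, F)`. -/
def gammaSet (U : ℕ → Set (lip0 X x₀ F)) : Set (lip0 X x₀ F) :=
  ⋃ n : ℕ, ∑ i ∈ Finset.range (n + 1), (U i ∩ {f | ‖f‖ ≤ 2 ^ i})

/-- The mixed topology `τ_γ = γ[Lip, τ₀]` on `Lip₀(X, F)`: the topology whose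
neighborhoods of a point `f` are generated by the translates by `f` of the sets `γ(U)`,
where `U` runs over all sequences of convex balanced `τ₀`-neighborhoods of zero. -/
def tauGamma : TopologicalSpace (lip0 X x₀ F) :=
  TopologicalSpace.mkOfNhds fun f =>
    ⨅ (U : ℕ → Set (lip0 X x₀ F))
      (_ : ∀ n, U n ∈ @nhds _ (tau0 X x₀ F) 0 ∧ Convex ℝ (U n) ∧ Balanced ℝ (U n)),
      Filter.principal ((f + ·) '' gammaSet X x₀ F U)

/-- A subset of `Lip₀(X, F)` is norm bounded if the Lipschitz norms of its members are
uniformly bounded. -/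
def NormBounded (B : Set (lip0 X x₀ F)) : Prop :=
  ∃ C : ℝ, ∀ f ∈ B, ‖f‖ ≤ C

/-- The locally convex topology `γτ_γ` on `Lip₀(X, F)`, generated by the seminorms
`f ↦ sup_n αₙ ‖f xₙ - f yₙ‖ / d(xₙ, yₙ)` where `(αₙ)` is a sequence of positive reals
tending to zero and `((xₙ, yₙ))` is a sequence of pairs of distinct points of `X`. -/
def gammaTauGamma : TopologicalSpace (lip0 X x₀ F) :=
  ⨅ (α : ℕ → ℝ) (z : ℕ → X × X)
    (_ : (∀ n, 0 < α n) ∧ Filter.Tendsto α Filter.atTop (nhds 0) ∧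
      ∀ n, (z n).1 ≠ (z n).2),
    TopologicalSpace.induced
      (fun f => UniformFun.ofFun fun n =>
        (α n / dist (z n).1 (z n).2) • (toFun' f (z n).1 - toFun' f (z n).2))
      inferInstance

/-- Evaluation at a point of `X`, as a linear functional on `Lip₀(X)`. -/
def evalLM (x : X) : lip0 X x₀ ℝ →ₗ[ℝ] ℝ where
  toFun f := toFun' f x
  map_add' f g := rfl
  map_smul' c f := rfl

/-- Evaluation at a point of `X`, as a continuous linear functional on `Lip₀(X)`. -/
def evalCLM (x : X) : lip0 X x₀ ℝ →L[ℝ] ℝ :=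
  LinearMap.mkContinuous (evalLM X x₀ x) (dist x x₀)
    (fun f => by
      have h0 : toFun' f x₀ = 0 := apply_base f
      have h := norm_sub_le_lipNorm (x₀ := x₀) f x x₀
      rw [h0, sub_zero] at h
      calc ‖evalLM X x₀ x f‖ ≤ lipNorm X x₀ ℝ f * dist x x₀ := h
        _ = dist x x₀ * ‖f‖ := by rw [lip0_norm_def, mul_comm])

/-- The Lipschitz-free space `F(X)`: the closed linear span of the evaluation
functionals inside the dual of `Lip₀(X)`. -/
def freeSpace : Submodule ℝ (lip0 X x₀ ℝ →L[ℝ] ℝ) :=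
  (Submodule.span ℝ (Set.range (evalCLM X x₀))).topologicalClosure

/-- The Dirac map `δ : X → F(X)`. -/
def deltaF (x : X) : freeSpace X x₀ :=
  ⟨evalCLM X x₀ x,
    Submodule.le_topologicalClosure _ (Submodule.subset_span (Set.mem_range_self x))⟩

/-- For a normed space `G`, the topology on the dual `G'` of uniform convergence on the
convex balanced compact subsets of `G` (the topology of `G'_c`). -/
def dualcTop (G : Type*) [NormedAddCommGroup G] [NormedSpace ℝ G] :
    TopologicalSpace (G →L[ℝ] ℝ) :=
  TopologicalSpace.induced
    (fun φ => UniformOnFun.ofFun {L : Set G | IsCompact L ∧ Convex ℝ L ∧ Balanced ℝ L} ⇑φ)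
    inferInstance

/-!
The sets `γ(U)`, `U` admissible, form a `ModuleFilterBasis`: they are convex and balanced,
absorb every point, and `γ(V) + γ(V) ⊆ γ(U)` for `Vₙ = ½ Uₙ₊₁`, because scaling by `c` with
`|c| ≤ 2ᵏ` only shifts the layers `Uᵢ ∩ 2ⁱB` by `k`. Hence `τ_γ` is a locally convex vector
topology with basis `γ(U)` at `0`.

If `t` is such a topology and is coarser than `τ₀` on bounded sets, then for a convex
`t`-neighbourhood `W` of `0` there are convex balanced `τ₀`-neighbourhoods `Vₙ` with
`Vₙ ∩ 2ⁿB ⊆ 2⁻⁽ⁿ⁺¹⁾W`, so `γ(V) ⊆ ∑ᵢ 2⁻⁽ⁱ⁺¹⁾W ⊆ W`; taking `t = τ₀` gives `τ₀ ⊆ τ_γ`.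
Conversely, on a set of norms at most `C`, `b + (Uₘ ∩ 2ᵐB) ⊆ b + γ(U)` once `2ᵐ ≥ 2C`, so
`τ_γ` and `τ₀` agree there; and `U₀ ∩ B` is a norm neighbourhood of `0` because
`‖f x‖ ≤ ‖f‖ d(x, x₀)`, whence `τ_γ ⊆ τ_Lip`.
-/

end LipApprox

theorem IsTopologicalAddGroup.le_of_nhds_zero_le {G : Type*} [AddGroup G]
    {t₁ t₂ : TopologicalSpace G}
    (h₁ : @IsTopologicalAddGroup G t₁ _) (h₂ : @IsTopologicalAddGroup G t₂ _)
    (h : @nhds G t₁ 0 ≤ @nhds G t₂ 0) : t₁ ≤ t₂ := by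
  refine (le_iff_nhds _ _).2 fun x => ?_
  rw [← @map_add_left_nhds_zero G t₁ _ h₁ x, ← @map_add_left_nhds_zero G t₂ _ h₂ x]
  exact Filter.map_mono h

section Pointwise

variable {E : Type*} [NormedAddCommGroup E] [NormedSpace ℝ E]

lemma setOf_norm_le_eq_closedBall (r : ℝ) : {x : E | ‖x‖ ≤ r} = Metric.closedBall 0 r := by
  ext; simp

lemma smul_inv_smul_inter_subset {A : Set E} (h0 : (0 : E) ∈ A) {c : ℝ} {k : ℕ}
    (hc : |c| ≤ 2 ^ k) (i : ℕ) :
    c • (c⁻¹ • A ∩ {x | ‖x‖ ≤ 2 ^ i}) ⊆ A ∩ {x | ‖x‖ ≤ 2 ^ (k + i)} := by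
  rintro _ ⟨_, ⟨⟨a, ha, rfl⟩, hnorm⟩, rfl⟩
  refine ⟨?_, ?_⟩
  · rcases eq_or_ne c 0 with rfl | hc0
    · simpa using h0
    · simpa only [smul_inv_smul₀ hc0] using ha
  · rw [Set.mem_ofPred_eq, norm_smul, Real.norm_eq_abs, pow_add]
    exact mul_le_mul hc hnorm (norm_nonneg _) (by positivity)

lemma Convex.sum_range_inv_two_pow_smul_subset {W : Set E} (hW : Convex ℝ W) (h0 : (0 : E) ∈ W)
    (n : ℕ) : ∑ i ∈ Finset.range n, ((2 : ℝ)⁻¹) ^ (i + 1) • W ⊆ W := by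
  have hle (m : ℕ) : (2⁻¹ : ℝ) ^ m ≤ 1 := pow_le_one₀ (by norm_num) (by norm_num)
  have hshrink : ∀ m : ℕ, (1 - (2⁻¹ : ℝ) ^ m) • W ⊆ W := by
    rintro m _ ⟨w, hw, rfl⟩
    have hpos : 0 < (2⁻¹ : ℝ) ^ m := by positivity
    exact hW.smul_mem_of_zero_mem h0 hw ⟨by linarith [hle m], by linarith⟩
  refine subset_trans ?_ (hshrink n)
  induction n with
  | zero => simpa using ⟨0, h0, smul_zero _⟩
  | succ n ih =>
    calc ∑ i ∈ Finset.range (n + 1), ((2 : ℝ)⁻¹) ^ (i + 1) • W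
        ⊆ (1 - (2⁻¹ : ℝ) ^ n) • W + ((2 : ℝ)⁻¹) ^ (n + 1) • W := by
          rw [Finset.sum_range_succ]
          exact Set.add_subset_add ih subset_rfl
      _ = (1 - (2⁻¹ : ℝ) ^ (n + 1)) • W := by
          rw [← hW.add_smul (by linarith [hle n]) (by positivity)]
          congr 1
          ring

end Pointwise

namespace LipApprox

variable {X : Type*} [MetricSpace X] {x₀ : X}
variable {F : Type*} [NormedAddCommGroup F] [NormedSpace ℝ F]

lemma norm_apply_le (f : lip0 X x₀ F) (x : X) : ‖toFun' f x‖ ≤ ‖f‖ * dist x x₀ := by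
  simpa [apply_base f, lip0_norm_def] using norm_sub_le_lipNorm f x x₀

variable (X x₀ F) in
def toCMₗ : lip0 X x₀ F →ₗ[ℝ] C(X, F) where
  toFun := toCM X x₀ F
  map_add' _ _ := rfl
  map_smul' _ _ := rfl

lemma isTopologicalAddGroup_tau0 : @IsTopologicalAddGroup _ (tau0 X x₀ F) _ :=
  topologicalAddGroup_induced (toCMₗ X x₀ F)

lemma continuousSMul_tau0 : @ContinuousSMul ℝ _ _ _ (tau0 X x₀ F) :=
  continuousSMul_induced (toCMₗ X x₀ F)

lemma locallyConvexSpace_tau0 : @LocallyConvexSpace ℝ _ _ _ _ _ (tau0 X x₀ F) :=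
  LocallyConvexSpace.induced (toCMₗ X x₀ F)

lemma continuous_toCM : Continuous (toCM X x₀ F) := by
  refine continuous_of_continuousAt_zero (toCMₗ X x₀ F) ?_
  rw [ContinuousAt, map_zero, ContinuousMap.tendsto_iff_forall_isCompact_tendstoUniformlyOn]
  intro K hK
  obtain ⟨R, hR⟩ := hK.isBounded.subset_closedBall x₀
  rw [Metric.tendstoUniformlyOn_iff]
  intro ε hε
  have hR1 : 0 < |R| + 1 := by positivity
  filter_upwards [Metric.ball_mem_nhds 0 (div_pos hε hR1)] with f hf x hx
  have hx : dist x x₀ ≤ |R| + 1 := (hR hx).trans ((le_abs_self R).trans (by linarith))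
  rw [mem_ball_zero_iff] at hf
  calc dist (0 : F) (toFun' f x) = ‖toFun' f x‖ := by rw [dist_zero_left]
    _ ≤ ‖f‖ * (|R| + 1) := by grw [norm_apply_le f x, hx]
    _ < ε / (|R| + 1) * (|R| + 1) := by gcongr
    _ = ε := div_mul_cancel₀ ε hR1.ne'

lemma le_tau0 : (inferInstance : TopologicalSpace (lip0 X x₀ F)) ≤ tau0 X x₀ F :=
  continuous_iff_le_induced.1 continuous_toCM

variable (X x₀ F) in
def gammaPartial (U : ℕ → Set (lip0 X x₀ F)) (n : ℕ) : Set (lip0 X x₀ F) :=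
  ∑ i ∈ Finset.range (n + 1), (U i ∩ {f | ‖f‖ ≤ 2 ^ i})

section GammaSet

variable {U V : ℕ → Set (lip0 X x₀ F)}

lemma gammaSet_eq_iUnion (U : ℕ → Set (lip0 X x₀ F)) :
    gammaSet X x₀ F U = ⋃ n, gammaPartial X x₀ F U n := rfl

lemma zero_mem_sum_layers (h0 : ∀ i, (0 : lip0 X x₀ F) ∈ U i) (s : Finset ℕ) :
    (0 : lip0 X x₀ F) ∈ ∑ i ∈ s, (U i ∩ {f | ‖f‖ ≤ 2 ^ i}) :=
  Finset.sum_induction _ (0 ∈ ·) (fun _ _ ha hb => by simpa using Set.add_mem_add ha hb)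
    rfl fun i _ => ⟨h0 i, by simp⟩

lemma monotone_gammaPartial (h0 : ∀ i, (0 : lip0 X x₀ F) ∈ U i) :
    Monotone (gammaPartial X x₀ F U) :=
  monotone_nat_of_le_succ fun n => by
    rw [gammaPartial, gammaPartial, Finset.sum_range_succ _ (n + 1)]
    exact Set.subset_add_left _ ⟨h0 _, by simp⟩

lemma inter_subset_gammaSet (h0 : ∀ i, (0 : lip0 X x₀ F) ∈ U i) (m : ℕ) :
    U m ∩ {f | ‖f‖ ≤ 2 ^ m} ⊆ gammaSet X x₀ F U := by
  refine subset_trans ?_ (Set.subset_iUnion _ m)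
  rw [Finset.sum_range_succ]
  exact Set.subset_add_right _ (zero_mem_sum_layers h0 _)

lemma gammaSet_mono (h : ∀ n, U n ⊆ V n) : gammaSet X x₀ F U ⊆ gammaSet X x₀ F V :=
  Set.iUnion_mono fun _ => Set.finsetSum_subset_finsetSum _ _ _ fun i _ =>
    Set.inter_subset_inter_left _ (h i)

lemma gammaSet_inter_subset (U V : ℕ → Set (lip0 X x₀ F)) :
    gammaSet X x₀ F (fun n => U n ∩ V n) ⊆ gammaSet X x₀ F U ∩ gammaSet X x₀ F V :=
  Set.subset_inter (gammaSet_mono fun _ => Set.inter_subset_left)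
    (gammaSet_mono fun _ => Set.inter_subset_right)

lemma convex_gammaSet (hc : ∀ i, Convex ℝ (U i)) (h0 : ∀ i, (0 : lip0 X x₀ F) ∈ U i) :
    Convex ℝ (gammaSet X x₀ F U) :=
  (monotone_gammaPartial h0).directed_le.convex_iUnion fun n =>
    Finset.sum_induction _ (Convex ℝ) (fun _ _ => Convex.add) (convex_singleton 0) fun i _ =>
      (hc i).inter (setOf_norm_le_eq_closedBall (E := lip0 X x₀ F) _ ▸ convex_closedBall 0 _)

lemma balanced_gammaSet (hb : ∀ i, Balanced ℝ (U i)) : Balanced ℝ (gammaSet X x₀ F U) :=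
  balanced_iUnion fun n =>
    Finset.sum_induction _ (Balanced ℝ) (fun _ _ => Balanced.add) balanced_zero fun i _ =>
      (hb i).inter (setOf_norm_le_eq_closedBall (E := lip0 X x₀ F) _ ▸ balanced_closedBall_zero)

lemma smul_gammaSet_subset (h0 : ∀ i, (0 : lip0 X x₀ F) ∈ U i) {c : ℝ} {k : ℕ}
    (hc : |c| ≤ 2 ^ k) :
    c • gammaSet X x₀ F (fun i => c⁻¹ • U (i + k)) ⊆ gammaSet X x₀ F U := by
  rw [gammaSet_eq_iUnion, Set.smul_set_iUnion]
  refine Set.iUnion_subset fun n => ?_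
  calc c • gammaPartial X x₀ F (fun i => c⁻¹ • U (i + k)) n
      = ∑ i ∈ Finset.range (n + 1), c • (c⁻¹ • U (i + k) ∩ {f | ‖f‖ ≤ 2 ^ i}) :=
        Finset.smul_sum
    _ ⊆ ∑ i ∈ Finset.range (n + 1), (U (k + i) ∩ {f | ‖f‖ ≤ 2 ^ (k + i)}) :=
        Set.finsetSum_subset_finsetSum _ _ _ fun i _ => by
          simpa only [add_comm i k] using smul_inv_smul_inter_subset (h0 (i + k)) hc i
    _ ⊆ gammaPartial X x₀ F U (k + n) := by
        rw [gammaPartial, add_assoc k n 1, Finset.sum_range_add _ k (n + 1)]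
        exact Set.subset_add_right _ (zero_mem_sum_layers h0 _)
    _ ⊆ gammaSet X x₀ F U := Set.subset_iUnion _ _

end GammaSet

variable (X x₀ F) in
def IsAdmissibleSeq (U : ℕ → Set (lip0 X x₀ F)) : Prop :=
  ∀ n, U n ∈ @nhds _ (tau0 X x₀ F) 0 ∧ Convex ℝ (U n) ∧ Balanced ℝ (U n)

namespace IsAdmissibleSeq

variable {U V : ℕ → Set (lip0 X x₀ F)}

lemma zero_mem (hU : IsAdmissibleSeq X x₀ F U) (n : ℕ) : (0 : lip0 X x₀ F) ∈ U n :=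
  @mem_of_mem_nhds _ (tau0 X x₀ F) _ _ (hU n).1

lemma convex_gammaSet (hU : IsAdmissibleSeq X x₀ F U) : Convex ℝ (gammaSet X x₀ F U) :=
  LipApprox.convex_gammaSet (fun n => (hU n).2.1) hU.zero_mem

lemma balanced_gammaSet (hU : IsAdmissibleSeq X x₀ F U) : Balanced ℝ (gammaSet X x₀ F U) :=
  LipApprox.balanced_gammaSet fun n => (hU n).2.2

lemma zero_mem_gammaSet (hU : IsAdmissibleSeq X x₀ F U) :
    (0 : lip0 X x₀ F) ∈ gammaSet X x₀ F U :=
  inter_subset_gammaSet hU.zero_mem 0 ⟨hU.zero_mem 0, by simp⟩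

lemma inter (hU : IsAdmissibleSeq X x₀ F U) (hV : IsAdmissibleSeq X x₀ F V) :
    IsAdmissibleSeq X x₀ F (fun n => U n ∩ V n) := fun n =>
  ⟨Filter.inter_mem (hU n).1 (hV n).1, (hU n).2.1.inter (hV n).2.1, (hU n).2.2.inter (hV n).2.2⟩

lemma smul_shift (hU : IsAdmissibleSeq X x₀ F U) {c : ℝ} (hc : c ≠ 0) (k : ℕ) :
    IsAdmissibleSeq X x₀ F (fun n => c • U (n + k)) := fun n => by
  let := tau0 X x₀ F
  have := continuousSMul_tau0 (X := X) (x₀ := x₀) (F := F)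
  exact ⟨(set_smul_mem_nhds_zero_iff hc).2 (hU (n + k)).1, (hU (n + k)).2.1.smul c,
    (hU (n + k)).2.2.smul c⟩

lemma add_gammaSet_subset (hU : IsAdmissibleSeq X x₀ F U) :
    gammaSet X x₀ F (fun n => (2 : ℝ)⁻¹ • U (n + 1)) +
      gammaSet X x₀ F (fun n => (2 : ℝ)⁻¹ • U (n + 1)) ⊆ gammaSet X x₀ F U := by
  rintro _ ⟨a, ha, b, hb, rfl⟩
  have hmid := (hU.smul_shift (inv_ne_zero two_ne_zero) 1).convex_gammaSet ha hb
    (by norm_num : (0 : ℝ) ≤ 2⁻¹) (by norm_num : (0 : ℝ) ≤ 2⁻¹) (by norm_num)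
  have := smul_gammaSet_subset hU.zero_mem (c := 2) (k := 1) (by norm_num)
    (Set.smul_mem_smul_set hmid)
  rwa [smul_add, smul_inv_smul₀ two_ne_zero, smul_inv_smul₀ two_ne_zero] at this

lemma eventually_smul_mem_gammaSet (hU : IsAdmissibleSeq X x₀ F U) (f : lip0 X x₀ F) :
    ∀ᶠ c in 𝓝 (0 : ℝ), c • f ∈ gammaSet X x₀ F U := by
  obtain ⟨m, hm⟩ := pow_unbounded_of_one_lt ‖f‖ one_lt_two
  have hU₀ : ∀ᶠ c in 𝓝 (0 : ℝ), c • f ∈ U m := by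
    let := tau0 X x₀ F
    have := continuousSMul_tau0 (X := X) (x₀ := x₀) (F := F)
    have : Tendsto (fun c : ℝ => c • f) (𝓝 0) (𝓝 0) :=
      (continuous_id.smul continuous_const).tendsto' 0 0 (zero_smul ℝ f)
    exact this (hU m).1
  filter_upwards [hU₀, Metric.closedBall_mem_nhds (0 : ℝ) one_pos] with c hcU hc
  refine inter_subset_gammaSet hU.zero_mem m ⟨hcU, ?_⟩
  rw [mem_closedBall_zero_iff] at hc
  calc ‖c • f‖ = ‖c‖ * ‖f‖ := norm_smul c f
    _ ≤ 1 * 2 ^ m := mul_le_mul hc hm.le (norm_nonneg f) zero_le_one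
    _ = 2 ^ m := one_mul _

end IsAdmissibleSeq

lemma isAdmissibleSeq_univ : IsAdmissibleSeq X x₀ F fun _ => Set.univ :=
  fun _ => ⟨Filter.univ_mem, convex_univ, balanced_univ⟩

variable (X x₀ F) in
def gammaBasis : ModuleFilterBasis ℝ (lip0 X x₀ F) where
  sets := gammaSet X x₀ F '' {U | IsAdmissibleSeq X x₀ F U}
  nonempty := ⟨_, _, isAdmissibleSeq_univ, rfl⟩
  inter_sets := by
    rintro _ _ ⟨U, hU, rfl⟩ ⟨V, hV, rfl⟩
    exact ⟨_, ⟨_, hU.inter hV, rfl⟩, gammaSet_inter_subset U V⟩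
  zero' := by
    rintro _ ⟨U, hU, rfl⟩
    exact hU.zero_mem_gammaSet
  add' := by
    rintro _ ⟨U, hU, rfl⟩
    exact ⟨_, ⟨_, hU.smul_shift (inv_ne_zero two_ne_zero) 1, rfl⟩, hU.add_gammaSet_subset⟩
  neg' := by
    rintro _ ⟨U, hU, rfl⟩
    exact ⟨_, ⟨U, hU, rfl⟩, fun f hf => hU.balanced_gammaSet.neg_mem_iff.2 hf⟩
  conj' := by
    rintro f _ ⟨U, hU, rfl⟩
    exact ⟨_, ⟨U, hU, rfl⟩, fun g hg => by simpa using hg⟩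
  smul' := by
    rintro _ ⟨U, hU, rfl⟩
    exact ⟨_, Metric.closedBall_mem_nhds 0 one_pos, _, ⟨U, hU, rfl⟩,
      balanced_iff_closedBall_smul.1 hU.balanced_gammaSet⟩
  smul_left' := by
    rintro c _ ⟨U, hU, rfl⟩
    rcases eq_or_ne c 0 with rfl | hc
    · exact ⟨_, ⟨U, hU, rfl⟩, fun f _ => by simpa using hU.zero_mem_gammaSet⟩
    obtain ⟨k, hk⟩ := pow_unbounded_of_one_lt |c| one_lt_two
    exact ⟨_, ⟨_, hU.smul_shift (inv_ne_zero hc) k, rfl⟩,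
      fun f hf => smul_gammaSet_subset hU.zero_mem hk.le (Set.smul_mem_smul_set hf)⟩
  smul_right' := by
    rintro f _ ⟨U, hU, rfl⟩
    exact hU.eventually_smul_mem_gammaSet f

lemma gammaBasis_N_eq (f : lip0 X x₀ F) :
    (gammaBasis X x₀ F).N f =
      ⨅ (U : ℕ → Set (lip0 X x₀ F)) (_ : IsAdmissibleSeq X x₀ F U),
        Filter.principal ((f + ·) '' gammaSet X x₀ F U) := by
  refine ((gammaBasis X x₀ F).hasBasis f).ext (Filter.hasBasis_biInf_principal' ?_ ?_) ?_ ?_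
  · exact fun U hU V hV => ⟨_, hU.inter hV,
      Set.image_mono ((gammaSet_inter_subset U V).trans Set.inter_subset_left),
      Set.image_mono ((gammaSet_inter_subset U V).trans Set.inter_subset_right)⟩
  · exact ⟨_, isAdmissibleSeq_univ⟩
  · rintro _ ⟨U, hU, rfl⟩
    exact ⟨U, hU, subset_rfl⟩
  · exact fun U hU => ⟨_, ⟨U, hU, rfl⟩, subset_rfl⟩

lemma tauGamma_eq_topology : tauGamma X x₀ F = (gammaBasis X x₀ F).topology :=
  congrArg TopologicalSpace.mkOfNhds (funext fun f => (gammaBasis_N_eq f).symm)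

lemma tauGamma_nhds_zero_hasBasis :
    (@nhds _ (tauGamma X x₀ F) 0).HasBasis (IsAdmissibleSeq X x₀ F) (gammaSet X x₀ F) := by
  rw [tauGamma_eq_topology]
  refine (gammaBasis X x₀ F).nhds_zero_hasBasis.to_hasBasis ?_
    fun U hU => ⟨_, ⟨U, hU, rfl⟩, subset_rfl⟩
  rintro _ ⟨U, hU, rfl⟩
  exact ⟨U, hU, subset_rfl⟩

lemma isTopologicalAddGroup_tauGamma : @IsTopologicalAddGroup _ (tauGamma X x₀ F) _ := by
  rw [tauGamma_eq_topology]
  exact (gammaBasis X x₀ F).toAddGroupFilterBasis.isTopologicalAddGroup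

lemma continuousSMul_tauGamma : @ContinuousSMul ℝ _ _ _ (tauGamma X x₀ F) := by
  rw [tauGamma_eq_topology]
  exact (gammaBasis X x₀ F).continuousSMul

lemma locallyConvexSpace_tauGamma : @LocallyConvexSpace ℝ _ _ _ _ _ (tauGamma X x₀ F) := by
  let := tauGamma X x₀ F
  have := isTopologicalAddGroup_tauGamma (X := X) (x₀ := x₀) (F := F)
  exact .ofBasisZero ℝ _ _ _ tauGamma_nhds_zero_hasBasis fun U hU => hU.convex_gammaSet

lemma exists_nhds_tau0_inter_subset {t : TopologicalSpace (lip0 X x₀ F)}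
    (ht : ∀ B : Set (lip0 X x₀ F), NormBounded X x₀ F B →
      TopologicalSpace.induced ((↑) : B → lip0 X x₀ F) (tau0 X x₀ F) ≤
        TopologicalSpace.induced ((↑) : B → lip0 X x₀ F) t)
    {W : Set (lip0 X x₀ F)} (hW : W ∈ @nhds _ t 0) {r : ℝ} (hr : 0 ≤ r) :
    ∃ V, (V ∈ @nhds _ (tau0 X x₀ F) 0 ∧ Convex ℝ V ∧ Balanced ℝ V) ∧
      V ∩ {f | ‖f‖ ≤ r} ⊆ W := by
  set B := {f : lip0 X x₀ F | ‖f‖ ≤ r}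
  have h0 : (0 : lip0 X x₀ F) ∈ B := by simpa [B] using hr
  have hnhds := (le_iff_nhds _ _).1 (ht B ⟨r, fun _ hf => hf⟩) ⟨0, h0⟩
  rw [@nhds_induced _ _ (tau0 X x₀ F), @nhds_induced _ _ t] at hnhds
  obtain ⟨A, hA, hAW⟩ := Filter.mem_comap.1 (hnhds (Filter.preimage_mem_comap hW))
  let := tau0 X x₀ F
  have := isTopologicalAddGroup_tau0 (X := X) (x₀ := x₀) (F := F)
  have := continuousSMul_tau0 (X := X) (x₀ := x₀) (F := F)
  have := locallyConvexSpace_tau0 (X := X) (x₀ := x₀) (F := F)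
  obtain ⟨V, ⟨hV, hVb, hVc⟩, hVA⟩ := (nhds_hasBasis_absConvex ℝ _).mem_iff.1 hA
  exact ⟨V, ⟨hV, hVc, hVb⟩, fun f hf => hAW (show (⟨f, hf.2⟩ : B) ∈ _ from hVA hf.1)⟩

theorem tauGamma_le_of_induced_tau0_le {t : TopologicalSpace (lip0 X x₀ F)}
    (h₁ : @IsTopologicalAddGroup _ t _) (h₂ : @ContinuousSMul ℝ _ _ _ t)
    (h₃ : @LocallyConvexSpace ℝ _ _ _ _ _ t)
    (h₄ : ∀ B : Set (lip0 X x₀ F), NormBounded X x₀ F B →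
      TopologicalSpace.induced ((↑) : B → lip0 X x₀ F) (tau0 X x₀ F) ≤
        TopologicalSpace.induced ((↑) : B → lip0 X x₀ F) t) :
    tauGamma X x₀ F ≤ t := by
  refine isTopologicalAddGroup_tauGamma.le_of_nhds_zero_le h₁ ?_
  let := t
  refine (tauGamma_nhds_zero_hasBasis.le_basis_iff
    (LocallyConvexSpace.convex_basis_zero ℝ _)).2 ?_
  rintro W ⟨hW, hWc⟩
  choose V hV hVW using fun n : ℕ => exists_nhds_tau0_inter_subset h₄
    ((set_smul_mem_nhds_zero_iff (by positivity : ((2 : ℝ)⁻¹) ^ (n + 1) ≠ 0)).2 hW)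
    (by positivity : (0 : ℝ) ≤ 2 ^ n)
  refine ⟨V, hV, Set.iUnion_subset fun n => ?_⟩
  exact (Set.finsetSum_subset_finsetSum _ _ _ fun i _ => hVW i).trans
    (hWc.sum_range_inv_two_pow_smul_subset (mem_of_mem_nhds hW) _)

lemma tauGamma_le_tau0 : tauGamma X x₀ F ≤ tau0 X x₀ F :=
  tauGamma_le_of_induced_tau0_le isTopologicalAddGroup_tau0 continuousSMul_tau0
    locallyConvexSpace_tau0 fun _ _ => le_rfl

lemma le_tauGamma : (inferInstance : TopologicalSpace (lip0 X x₀ F)) ≤ tauGamma X x₀ F := by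
  refine IsTopologicalAddGroup.le_of_nhds_zero_le inferInstance isTopologicalAddGroup_tauGamma
    (tauGamma_nhds_zero_hasBasis.ge_iff.2 fun U hU => ?_)
  refine Filter.mem_of_superset (Filter.inter_mem (nhds_mono le_tau0 (hU 0).1)
    (Metric.closedBall_mem_nhds (0 : lip0 X x₀ F) one_pos)) fun f hf => ?_
  exact inter_subset_gammaSet hU.zero_mem 0 ⟨hf.1, by simpa using hf.2⟩

theorem induced_tauGamma_eq_induced_tau0 {B : Set (lip0 X x₀ F)} (hB : NormBounded X x₀ F B) :
    TopologicalSpace.induced ((↑) : B → lip0 X x₀ F) (tauGamma X x₀ F) =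
      TopologicalSpace.induced ((↑) : B → lip0 X x₀ F) (tau0 X x₀ F) := by
  refine le_antisymm (induced_mono tauGamma_le_tau0) ((le_iff_nhds _ _).2 fun b => ?_)
  obtain ⟨C, hC⟩ := hB
  rw [@nhds_induced _ _ (tau0 X x₀ F), @nhds_induced _ _ (tauGamma X x₀ F),
    ← @map_add_left_nhds_zero _ (tau0 X x₀ F) _ isTopologicalAddGroup_tau0,
    ← @map_add_left_nhds_zero _ (tauGamma X x₀ F) _ isTopologicalAddGroup_tauGamma]
  refine ((tauGamma_nhds_zero_hasBasis.map _).comap _).ge_iff.2 fun U hU => ?_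
  obtain ⟨m, hm⟩ := pow_unbounded_of_one_lt (2 * C) one_lt_two
  refine Filter.mem_of_superset (Filter.preimage_mem_comap (Filter.image_mem_map (hU m).1)) ?_
  rintro b' ⟨a, ha, hab⟩
  refine ⟨a, inter_subset_gammaSet hU.zero_mem m ⟨ha, ?_⟩, hab⟩
  calc ‖a‖ = ‖(b' : lip0 X x₀ F) - b‖ := by rw [eq_sub_of_add_eq' hab]
    _ ≤ ‖(b' : lip0 X x₀ F)‖ + ‖(b : lip0 X x₀ F)‖ := norm_sub_le _ _
    _ ≤ 2 * C := by linarith [hC _ b'.2, hC _ b.2]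
    _ ≤ 2 ^ m := hm.le

-- In Mathlib's order on topologies, `t₁ ≤ t₂` means that `t₁` is finer than `t₂`.
/-- For a pointed metric space `X`, on `Lip₀(X)` one has
`τ₀ ⊆ τ_γ ⊆ τ_Lip` (recall that in Mathlib's order on topologies, finer = smaller),
and `τ_γ` is the largest (finest) locally convex topology on `Lip₀(X)` which coincides
with `τ₀` on each norm-bounded subset of `Lip₀(X)`. -/
theorem stmt0 (X : Type*) [MetricSpace X] (x₀ : X) :
    tauGamma X x₀ ℝ ≤ tau0 X x₀ ℝ ∧
    (inferInstance : TopologicalSpace (lip0 X x₀ ℝ)) ≤ tauGamma X x₀ ℝ ∧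
    IsLeast
      {t : TopologicalSpace (lip0 X x₀ ℝ) |
        @IsTopologicalAddGroup _ t _ ∧ @ContinuousSMul ℝ _ _ _ t ∧
        @LocallyConvexSpace ℝ _ _ _ _ _ t ∧
        ∀ B : Set (lip0 X x₀ ℝ), NormBounded X x₀ ℝ B →
          TopologicalSpace.induced ((↑) : B → lip0 X x₀ ℝ) t =
            TopologicalSpace.induced ((↑) : B → lip0 X x₀ ℝ) (tau0 X x₀ ℝ)}
      (tauGamma X x₀ ℝ) := by
  refine ⟨tauGamma_le_tau0, le_tauGamma, ⟨isTopologicalAddGroup_tauGamma,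
    continuousSMul_tauGamma, locallyConvexSpace_tauGamma,
    fun B hB => induced_tauGamma_eq_induced_tau0 hB⟩, ?_⟩
  rintro t ⟨h₁, h₂, h₃, h₄⟩
  exact tauGamma_le_of_induced_tau0_le h₁ h₂ h₃ fun B hB => (h₄ B hB).ge
end LipApprox
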